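/- arXiv:2405.15140 — 3 statements merged into one kernel-verified Lean document; each statement's English description precedes it below -/
import Mathlib

section
/- For scalars p ∈ (0,1] and y ∈ (0,1], and all a1, a2 ∈ R, the quadratic form (y/p) a1^2 + 2 log(p) a1 a2 + (4/y) a2^2 is nonnegative. -/
/-- For `p, y ∈ (0,1]` and all `a1, a2 ∈ ℝ`, the quadratic form
`(y/p) a1² + 2 log(p) a1 a2 + (4/y) a2²` is nonnegative. -/
theorem log_quadratic_form_nonneg (p y a1 a2 : ℝ)
    (hp : 0 < p) (hp1 : p ≤ 1) (hy : 0 < y) (hy1 : y ≤ 1) :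
    0 ≤ y / p * a1 ^ 2 + 2 * Real.log p * (a1 * a2) + 4 / y * a2 ^ 2 := by
  set s := Real.sqrt p with hs
  have hs0 : 0 < s := Real.sqrt_pos.mpr hp
  have hsp : s ^ 2 = p := Real.sq_sqrt hp.le
  have hlog : Real.log p = 2 * Real.log s := by
    rw [← hsp, Real.log_pow]; ring
  have h1 : Real.log (1 / s) ≤ 1 / s - 1 := Real.log_le_sub_one_of_pos (by positivity)
  have h2 : Real.log (1 / s) = - Real.log s := by
    rw [Real.log_div one_ne_zero hs0.ne', Real.log_one]; ring
  have hlogle : - Real.log s ≤ 1 / s := by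
    rw [← h2]; have : (0:ℝ) < 1 := one_pos; nlinarith [hs0]
  have hlogneg : Real.log s ≤ 0 := Real.log_nonpos hs0.le (by
    nlinarith [Real.sq_sqrt hp.le, Real.sqrt_nonneg p])
  have hkey : (Real.log p) ^ 2 ≤ 4 / p := by
    rw [hlog, ← hsp]
    have h3 : (- Real.log s) ^ 2 ≤ (1 / s) ^ 2 := by
      apply pow_le_pow_left₀ (by linarith) hlogle
    rw [div_pow] at h3
    have h4 : (Real.log s) ^ 2 * s ^ 2 ≤ 1 := by
      have h5 : (Real.log s) ^ 2 ≤ 1 / s ^ 2 := by nlinarith [h3]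
      have := (le_div_iff₀ (by positivity : (0:ℝ) < s ^ 2)).mp h5
      linarith
    rw [le_div_iff₀ (by positivity)]
    nlinarith [h4]
  have hA : 0 < y / p := by positivity
  have hC : 0 < 4 / y := by positivity
  have hAC : (Real.log p) ^ 2 ≤ (y / p) * (4 / y) := by
    have : (y / p) * (4 / y) = 4 / p := by field_simp
    rw [this]; exact hkey
  nlinarith [sq_nonneg (y / p * a1 + Real.log p * a2), sq_nonneg a2, mul_pos hA hC,
    mul_nonneg (sub_nonneg.mpr hAC) (sq_nonneg a2), hA.le]
end

section
/- For p ∈ (0,1) and y ∈ (0,1), the function g(p,y) = -(1-p) y log p - p (1-y) log(1-p) + 5 y log y + 5 (1-y) log(1-y) is convex in (p,y); equivalently, its 2×2 Hessian is positive semidefinite at every such point. -/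
/-!
Write `φ(p) = (p - 1) log p` and `G(p, y) = y φ(p) + 5 y log y`. Then
`g(p, y) = G(p, y) + G(1 - p, 1 - y)`, so it suffices that `G` is convex. Along a line, the second
derivative of `y h(p) + K y log y` is the quadratic form of `[[y h'', h'], [h', K / y]]`, which is
positive semidefinite as soon as `h'² ≤ K h''`. For `φ` on `(0, 1)`, `1 - 1/p ≤ log p < 0` puts
`φ'(p) = log p + 1 - 1/p` in `[2 - 2/p, 0)`, hence `φ'² ≤ 4 (1/p - 1)² ≤ 5 (1/p + 1/p²) = 5 φ''`.
-/

open Real Set AffineMap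

theorem ConvexOn.of_convexOn_lineMap {𝕜 E β : Type*} [Ring 𝕜] [PartialOrder 𝕜]
    [AddCommGroup E] [Module 𝕜 E] [AddCommMonoid β] [PartialOrder β] [SMul 𝕜 β]
    {s : Set E} {f : E → β} (hs : Convex 𝕜 s)
    (hf : ∀ x ∈ s, ∀ z ∈ s, ConvexOn 𝕜 (lineMap (k := 𝕜) x z ⁻¹' s) (f ∘ lineMap x z)) :
    ConvexOn 𝕜 s f := by
  refine ⟨hs, fun x hx z hz a b ha hb hab => ?_⟩
  have key := (hf x hx z hz).2 (x := 0) (y := 1) (by simpa using hx) (by simpa using hz) ha hb hab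
  have hline : lineMap x z b = a • x + b • z := by
    rw [lineMap_apply_module, ← hab, add_sub_cancel_right]
  simpa [hline] using key

theorem quadratic_nonneg_of_sq_le_mul {α β γ : ℝ} (hγ : 0 < γ) (hdisc : β ^ 2 ≤ α * γ)
    (a b : ℝ) : 0 ≤ α * a ^ 2 + 2 * β * a * b + γ * b ^ 2 := by
  have h : 0 ≤ γ * (α * a ^ 2 + 2 * β * a * b + γ * b ^ 2) := by
    nlinarith [sq_nonneg (β * a + γ * b), mul_nonneg (sub_nonneg.2 hdisc) (sq_nonneg a)]
  exact nonneg_of_mul_nonneg_right h hγ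

section LineDerivatives

variable {P Y h h' h'' : ℝ → ℝ} {a b K t : ℝ}

theorem hasDerivAt_mul_comp_add_mul_mul_log (hP : HasDerivAt P a t) (hY : HasDerivAt Y b t)
    (hh : HasDerivAt h (h' (P t)) (P t)) (hYt : Y t ≠ 0) :
    HasDerivAt (fun t => Y t * h (P t) + K * (Y t * log (Y t)))
      (b * h (P t) + a * Y t * h' (P t) + K * b * (log (Y t) + 1)) t :=
  ((hY.mul (hh.comp t hP)).add (((hasDerivAt_mul_log hYt).comp t hY).const_mul K)).congr_deriv
    (by simp only [Function.comp_apply]; ring)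

theorem hasDerivAt_deriv_mul_comp_add_mul_mul_log (hP : HasDerivAt P a t) (hY : HasDerivAt Y b t)
    (hh : HasDerivAt h (h' (P t)) (P t)) (hh' : HasDerivAt h' (h'' (P t)) (P t)) (hYt : Y t ≠ 0) :
    HasDerivAt (fun t => b * h (P t) + a * Y t * h' (P t) + K * b * (log (Y t) + 1))
      (Y t * h'' (P t) * a ^ 2 + 2 * h' (P t) * a * b + K / Y t * b ^ 2) t := by
  refine (((hh.comp t hP).const_mul b).add ((hY.const_mul a).mul (hh'.comp t hP)) |>.add
    (((hY.log hYt).add_const 1).const_mul (K * b))).congr_deriv ?_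
  simp only [Function.comp_apply]
  field_simp
  ring

end LineDerivatives

theorem convexOn_snd_mul_comp_fst_add_mul_mul_log {I : Set ℝ} (hIo : IsOpen I) (hIc : Convex ℝ I)
    {h h' h'' : ℝ → ℝ} {K : ℝ} (hK : 0 < K)
    (hh : ∀ p ∈ I, HasDerivAt h (h' p) p) (hh' : ∀ p ∈ I, HasDerivAt h' (h'' p) p)
    (hbound : ∀ p ∈ I, h' p ^ 2 ≤ K * h'' p) :
    ConvexOn ℝ (I ×ˢ Ioi 0) (fun q : ℝ × ℝ => q.2 * h q.1 + K * (q.2 * log q.2)) := by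
  refine ConvexOn.of_convexOn_lineMap (hIc.prod (convex_Ioi 0)) fun x _ z _ => ?_
  set a := z.1 - x.1
  set b := z.2 - x.2
  set P : ℝ → ℝ := ⇑(lineMap (k := ℝ) x.1 z.1)
  set Y : ℝ → ℝ := ⇑(lineMap (k := ℝ) x.2 z.2)
  have hP : ∀ t, HasDerivAt P a t := fun t => hasDerivAt_lineMap
  have hY : ∀ t, HasDerivAt Y b t := fun t => hasDerivAt_lineMap
  set D := lineMap (k := ℝ) x z ⁻¹' (I ×ˢ Ioi 0)
  have hD : ∀ t ∈ D, P t ∈ I ∧ 0 < Y t := fun t ht => by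
    simpa [D, P, Y, fst_lineMap, snd_lineMap] using ht
  have hline : (fun q : ℝ × ℝ => q.2 * h q.1 + K * (q.2 * log q.2)) ∘ lineMap x z =
      fun t => Y t * h (P t) + K * (Y t * log (Y t)) := by
    ext t; simp [P, Y, fst_lineMap, snd_lineMap]
  rw [hline]
  refine convexOn_of_hasDerivWithinAt2_nonneg ((hIc.prod (convex_Ioi 0)).affine_preimage _)
    (f' := fun t => b * h (P t) + a * Y t * h' (P t) + K * b * (log (Y t) + 1))
    (f'' := fun t => Y t * h'' (P t) * a ^ 2 + 2 * h' (P t) * a * b + K / Y t * b ^ 2)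
    (fun t ht => (hasDerivAt_mul_comp_add_mul_mul_log (hP t) (hY t) (hh _ (hD t ht).1)
      (hD t ht).2.ne').continuousAt.continuousWithinAt) ?_ ?_ ?_ <;>
    rw [((hIo.prod isOpen_Ioi).preimage lineMap_continuous).interior_eq]
  · exact fun t ht => (hasDerivAt_mul_comp_add_mul_mul_log (hP t) (hY t) (hh _ (hD t ht).1)
      (hD t ht).2.ne').hasDerivWithinAt
  · exact fun t ht => (hasDerivAt_deriv_mul_comp_add_mul_mul_log (hP t) (hY t) (hh _ (hD t ht).1)
      (hh' _ (hD t ht).1) (hD t ht).2.ne').hasDerivWithinAt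
  · intro t ht
    obtain ⟨hPt, hYt⟩ := hD t ht
    refine quadratic_nonneg_of_sq_le_mul (div_pos hK hYt) ?_ a b
    calc h' (P t) ^ 2 ≤ K * h'' (P t) := hbound _ hPt
      _ = Y t * h'' (P t) * (K / Y t) := by field_simp

theorem hasDerivAt_sub_one_mul_log {p : ℝ} (hp : p ≠ 0) :
    HasDerivAt (fun p => (p - 1) * log p) (log p + 1 - p⁻¹) p :=
  (((hasDerivAt_id' p).sub_const 1).mul (hasDerivAt_log hp)).congr_deriv (by field_simp; ring)

theorem hasDerivAt_log_add_one_sub_inv {p : ℝ} (hp : p ≠ 0) :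
    HasDerivAt (fun p => log p + 1 - p⁻¹) (p⁻¹ + (p ^ 2)⁻¹) p :=
  (((hasDerivAt_log hp).add_const 1).sub (hasDerivAt_inv hp)).congr_deriv (sub_neg_eq_add _ _)

theorem sq_log_add_one_sub_inv_le {p : ℝ} (hp₀ : 0 < p) (hp₁ : p < 1) :
    (log p + 1 - p⁻¹) ^ 2 ≤ 5 * (p⁻¹ + (p ^ 2)⁻¹) := by
  have hinv : 1 < p⁻¹ := one_lt_inv_iff₀.2 ⟨hp₀, hp₁⟩
  have hlow : 1 - p⁻¹ ≤ log p := one_sub_inv_le_log_of_pos hp₀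
  have hneg : log p < 0 := log_neg hp₀ hp₁
  rw [← inv_pow]
  nlinarith

/-- The function
`g(p,y) = -(1-p) y log p - p (1-y) log (1-p) + 5 y log y + 5 (1-y) log (1-y)`
is convex in `(p, y)` on `(0,1) × (0,1)`. -/
theorem modifiedEntropy_corrected_convexOn :
    ConvexOn ℝ ((Set.Ioo (0 : ℝ) 1) ×ˢ (Set.Ioo (0 : ℝ) 1))
      (fun q : ℝ × ℝ =>
        -(1 - q.1) * q.2 * Real.log q.1 - q.1 * (1 - q.2) * Real.log (1 - q.1) +
          5 * q.2 * Real.log q.2 + 5 * (1 - q.2) * Real.log (1 - q.2)) := by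
  have hG := convexOn_snd_mul_comp_fst_add_mul_mul_log isOpen_Ioo (convex_Ioo (0 : ℝ) 1)
    (by norm_num : (0 : ℝ) < 5) (fun p hp => hasDerivAt_sub_one_mul_log hp.1.ne')
    (fun p hp => hasDerivAt_log_add_one_sub_inv hp.1.ne')
    fun p hp => sq_log_add_one_sub_inv_le hp.1 hp.2
  let reflect : ℝ × ℝ →ᵃ[ℝ] ℝ × ℝ := AffineMap.const ℝ (ℝ × ℝ) (1, 1) - AffineMap.id ℝ (ℝ × ℝ)
  have hsub : Ioo (0 : ℝ) 1 ×ˢ Ioo (0 : ℝ) 1 ⊆ Ioo 0 1 ×ˢ Ioi 0 :=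
    prod_mono subset_rfl Ioo_subset_Ioi_self
  have hsub' : Ioo (0 : ℝ) 1 ×ˢ Ioo (0 : ℝ) 1 ⊆ reflect ⁻¹' (Ioo 0 1 ×ˢ Ioi 0) :=
    fun q hq => ⟨⟨sub_pos.2 hq.1.2, sub_lt_self 1 hq.1.1⟩, sub_pos.2 hq.2.2⟩
  have hconv : Convex ℝ (Ioo (0 : ℝ) 1 ×ˢ Ioo (0 : ℝ) 1) := (convex_Ioo 0 1).prod (convex_Ioo 0 1)
  refine ((hG.subset hsub hconv).add ((hG.comp_affineMap reflect).subset hsub' hconv)).congr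
    fun q _ => ?_
  simp only [reflect, Pi.add_apply, Function.comp_apply, coe_sub, coe_const, coe_id, Pi.sub_apply,
    Function.const_apply, id_eq, Prod.fst_sub, Prod.snd_sub]
  ring
end

section
/- For p ∈ (0,1), y ∈ (0,1), and all a1, a2 ∈ R, the quadratic form (y(1/p²+1/p) + (1-y)(1/(1-p)²+1/(1-p))) a1² + 2(1/(1-p) - 1/p + log p - log(1-p)) a1 a2 + (5/y + 5/(1-y)) a2² is nonnegative. -/
/-- Key log bound: for `0 < p < 1`, `(log p)^2 ≤ 4 / p`. -/
lemma logsq_le (p : ℝ) (h0 : 0 < p) (h1 : p < 1) : (Real.log p) ^ 2 ≤ 4 / p := by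
  have hs : 0 < Real.sqrt p := Real.sqrt_pos.2 h0
  have hsq : Real.sqrt p ^ 2 = p := Real.sq_sqrt h0.le
  have hlog : Real.log (Real.sqrt p) = Real.log p / 2 := Real.log_sqrt h0.le
  have h2 : Real.log (Real.sqrt p)⁻¹ ≤ (Real.sqrt p)⁻¹ - 1 :=
    Real.log_le_sub_one_of_pos (by positivity)
  rw [Real.log_inv] at h2
  have hneg : Real.log (Real.sqrt p) ≤ 0 :=
    Real.log_nonpos hs.le (by nlinarith [Real.sq_sqrt h0.le, Real.sqrt_nonneg p])
  have hb : -Real.log (Real.sqrt p) ≤ (Real.sqrt p)⁻¹ := by linarith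
  have hsq' : ((Real.sqrt p)⁻¹) ^ 2 = 1 / p := by
    rw [inv_pow, hsq]; simp [one_div]
  have : (Real.log (Real.sqrt p)) ^ 2 ≤ 1 / p := by
    nlinarith [sq_nonneg (Real.log (Real.sqrt p) + (Real.sqrt p)⁻¹)]
  have hp4 : (Real.log p) ^ 2 = 4 * (Real.log (Real.sqrt p)) ^ 2 := by
    rw [hlog]; ring
  rw [hp4]
  rw [div_eq_mul_one_div 4 p]
  linarith

lemma quad_nonneg {α γ L : ℝ} (hα : 0 < α) (h : L ^ 2 ≤ α * γ) (a1 a2 : ℝ) :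
    0 ≤ α * a1 ^ 2 + 2 * L * (a1 * a2) + γ * a2 ^ 2 := by
  nlinarith [sq_nonneg (α * a1 + L * a2), mul_nonneg (sub_nonneg.2 h) (sq_nonneg a2)]

/-- For `p, y ∈ (0,1)` and all `a1, a2 ∈ ℝ`, the Hessian quadratic form of the corrected
modified-entropy function is nonnegative. -/
theorem modifiedEntropy_hessian_form_nonneg (p y a1 a2 : ℝ)
    (hp : p ∈ Set.Ioo (0 : ℝ) 1) (hy : y ∈ Set.Ioo (0 : ℝ) 1) :
    0 ≤ (y * (1 / p ^ 2 + 1 / p) + (1 - y) * (1 / (1 - p) ^ 2 + 1 / (1 - p))) * a1 ^ 2 +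
      2 * (1 / (1 - p) - 1 / p + Real.log p - Real.log (1 - p)) * (a1 * a2) +
      (5 / y + 5 / (1 - y)) * a2 ^ 2 := by
  obtain ⟨hp0, hp1⟩ := hp
  obtain ⟨hy0, hy1⟩ := hy
  have hp1' : 0 < 1 - p := by linarith
  have hy1' : 0 < 1 - y := by linarith
  have h3 : 0 ≤ (y / p) * a1 ^ 2 + 2 * Real.log p * (a1 * a2) + (4 / y) * a2 ^ 2 := by
    apply quad_nonneg (by positivity)
    have := logsq_le p hp0 hp1
    have heq : (y / p) * (4 / y) = 4 / p := by field_simp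
    rw [heq]; exact this
  have h4 : 0 ≤ ((1 - y) / (1 - p)) * a1 ^ 2 + 2 * (-Real.log (1 - p)) * (a1 * a2) +
      (4 / (1 - y)) * a2 ^ 2 := by
    apply quad_nonneg (by positivity)
    have := logsq_le (1 - p) hp1' (by linarith)
    have heq : ((1 - y) / (1 - p)) * (4 / (1 - y)) = 4 / (1 - p) := by field_simp
    rw [heq, neg_pow]
    simpa using this
  have h1 : 0 ≤ (1 / y) * ((y / p) * a1 - a2) ^ 2 := by positivity
  have h2 : 0 ≤ (1 / (1 - y)) * (((1 - y) / (1 - p)) * a1 + a2) ^ 2 := by positivity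
  have key : (y * (1 / p ^ 2 + 1 / p) + (1 - y) * (1 / (1 - p) ^ 2 + 1 / (1 - p))) * a1 ^ 2 +
      2 * (1 / (1 - p) - 1 / p + Real.log p - Real.log (1 - p)) * (a1 * a2) +
      (5 / y + 5 / (1 - y)) * a2 ^ 2 =
      (1 / y) * ((y / p) * a1 - a2) ^ 2 +
      (1 / (1 - y)) * (((1 - y) / (1 - p)) * a1 + a2) ^ 2 +
      ((y / p) * a1 ^ 2 + 2 * Real.log p * (a1 * a2) + (4 / y) * a2 ^ 2) +
      (((1 - y) / (1 - p)) * a1 ^ 2 + 2 * (-Real.log (1 - p)) * (a1 * a2) +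
        (4 / (1 - y)) * a2 ^ 2) := by
    field_simp
    ring
  rw [key]
  linarith
end
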